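/- Let x = (x_1,…,x_R) be a vector of distinct real numbers and c = (c_1,…,c_R) a vector of real numbers with c_n ≠ 0 for all n. Then the eigenvalues of B(x,c), viewed as a complex R×R matrix, are pairwise distinct; equivalently, B(x,c) has R distinct complex eigenvalues (each eigenspace is one-dimensional). -/

import Mathlib

/-!
Since `B(x,c)` is real and skew-symmetric, `H = i B(x,c)` is Hermitian, hence unitarily
diagonalizable, so its eigenvalues are distinct as soon as no eigenspace is two-dimensional.
A two-dimensional eigenspace would contain an eigenvector `v ≠ 0` with `∑ c_n v_n = 0`. This is
ruled out by the displacement equation `diag(x) B - B diag(x) = c cᵀ - diag(c²)`: for any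
eigenvector `v` of the Hermitian `H` one has `v* [diag(x), H] v = 0`, which for `∑ c_n v_n = 0`
leaves `∑ c_n² |v_n|² = 0`.
-/

/-- The generalized weighted Hilbert matrix `B(x,c)` with entries
`b_{m,n} = c_m c_n / (x_m - x_n)` for `m ≠ n` and `0` on the diagonal. -/
noncomputable def Bmat {R : ℕ} (x c : Fin R → ℝ) : Matrix (Fin R) (Fin R) ℝ :=
  Matrix.of fun m n => if m = n then 0 else c m * c n / (x m - x n)

open Polynomial Matrix

namespace Matrix

variable {n : Type*} [Fintype n] {𝕜 : Type*} [RCLike 𝕜]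

lemma IsHermitian.star_dotProduct_commutator_mulVec_eq_zero {H : Matrix n n 𝕜}
    (hH : H.IsHermitian) (X : Matrix n n 𝕜) {v : n → 𝕜} {μ : ℝ} (hv : H *ᵥ v = μ • v) :
    star v ⬝ᵥ ((X * H - H * X) *ᵥ v) = 0 := by
  have hvH : star v ᵥ* H = μ • star v := by
    have := star_mulVec H v
    rwa [hH.eq, hv, star_smul, star_trivial, eq_comm] at this
  rw [sub_mulVec, ← mulVec_mulVec, ← mulVec_mulVec, dotProduct_sub, hv, mulVec_smul,
    dotProduct_mulVec (star v) H, hvH, dotProduct_smul, smul_dotProduct, sub_self]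

lemma IsHermitian.star_eigenvectorBasis_dotProduct [DecidableEq n] {H : Matrix n n 𝕜}
    (hH : H.IsHermitian) (i j : n) :
    star ⇑(hH.eigenvectorBasis i) ⬝ᵥ ⇑(hH.eigenvectorBasis j) = if i = j then 1 else 0 := by
  rw [dotProduct_comm, ← EuclideanSpace.inner_eq_star_dotProduct,
    orthonormal_iff_ite.mp hH.eigenvectorBasis.orthonormal]

lemma IsHermitian.eigenvalues_injective_of_eigenvector_dotProduct_eq_zero [DecidableEq n]
    {H : Matrix n n 𝕜} (hH : H.IsHermitian) (w : n → 𝕜)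
    (h : ∀ (μ : ℝ) (v : n → 𝕜), H *ᵥ v = μ • v → w ⬝ᵥ v = 0 → v = 0) :
    Function.Injective hH.eigenvalues := by
  intro j k hjk
  by_contra hne
  set u := ⇑(hH.eigenvectorBasis j)
  set u' := ⇑(hH.eigenvectorBasis k)
  have hu : H *ᵥ u = hH.eigenvalues j • u := hH.mulVec_eigenvectorBasis j
  have hu' : H *ᵥ u' = hH.eigenvalues j • u' := hjk ▸ hH.mulVec_eigenvectorBasis k
  have hcomb : (w ⬝ᵥ u') • u - (w ⬝ᵥ u) • u' = 0 := by
    refine h (hH.eigenvalues j) _ ?_ ?_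
    · rw [mulVec_sub, mulVec_smul, mulVec_smul, hu, hu', smul_sub, smul_comm _ (w ⬝ᵥ u'),
        smul_comm _ (w ⬝ᵥ u)]
    · rw [dotProduct_sub, dotProduct_smul, dotProduct_smul, smul_eq_mul, smul_eq_mul, mul_comm,
        sub_self]
  have hwu : w ⬝ᵥ u = 0 := by
    have := congrArg (star u' ⬝ᵥ ·) hcomb
    simpa [dotProduct_sub, dotProduct_smul, u, u', hH.star_eigenvectorBasis_dotProduct,
      Ne.symm hne] using this
  have hunit := hH.star_eigenvectorBasis_dotProduct j j
  rw [if_pos rfl, show ⇑(hH.eigenvectorBasis j) = u from rfl, h _ u hu hwu] at hunit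
  simp at hunit

lemma IsHermitian.roots_charpoly_smul [DecidableEq n] {H : Matrix n n 𝕜} (hH : H.IsHermitian)
    (a : 𝕜) :
    (a • H).charpoly.roots = Finset.univ.val.map (fun i => a * hH.eigenvalues i) := by
  have : (a • H).charpoly = ((Finset.univ.val.map fun i => a * hH.eigenvalues i).map
      fun b => X - C b).prod := by
    conv_lhs => rw [hH.spectral_theorem, Unitary.conjStarAlgAut_apply, ← smul_mul,
      ← Matrix.mul_smul, charpoly_mul_comm, ← mul_assoc]
    simp [← diagonal_smul, charpoly_diagonal, Multiset.map_map]
  rw [this, Polynomial.roots_multiset_prod_X_sub_C]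

end Matrix

section Bmat

variable {R : ℕ} (x c : Fin R → ℝ)

lemma Bmat_transpose : (Bmat x c)ᵀ = -Bmat x c := by
  ext m n
  simp only [transpose_apply, Matrix.neg_apply, Bmat, of_apply]
  by_cases h : n = m
  · simp [h]
  · rw [if_neg h, if_neg (Ne.symm h), ← div_neg, neg_sub, mul_comm]

lemma isHermitian_I_smul_Bmat : (Complex.I • (Bmat x c).map ((↑) : ℝ → ℂ)).IsHermitian := by
  rw [IsHermitian, conjTranspose_smul,
    ← conjTranspose_map _ (fun r => (Complex.conj_ofReal r).symm),
    conjTranspose_eq_transpose_of_trivial, Bmat_transpose, Matrix.map_neg _ Complex.ofReal_neg]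
  simp

lemma diagonal_mul_Bmat_sub_Bmat_mul_diagonal (hx : Function.Injective x) :
    diagonal x * Bmat x c - Bmat x c * diagonal x = vecMulVec c c - diagonal (c ^ 2) := by
  ext m n
  simp only [Matrix.sub_apply, diagonal_mul, mul_diagonal, vecMulVec_apply, Bmat, of_apply]
  by_cases h : m = n
  · simp [h, sq]
  · have : x m - x n ≠ 0 := sub_ne_zero.2 (hx.ne h)
    simp only [if_neg h, diagonal_apply_ne _ h, sub_zero]
    field_simp

end Bmat

open scoped ComplexOrder in
lemma Bmat_eigenvector_eq_zero_of_dotProduct_eq_zero {R : ℕ} {x c : Fin R → ℝ}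
    (hx : Function.Injective x) (hc : ∀ n, c n ≠ 0) {μ : ℝ} {v : Fin R → ℂ}
    (hv : (Complex.I • (Bmat x c).map ((↑) : ℝ → ℂ)) *ᵥ v = μ • v)
    (hcv : (fun n => (c n : ℂ)) ⬝ᵥ v = 0) : v = 0 := by
  set A := (Bmat x c).map ((↑) : ℝ → ℂ)
  set X : Matrix (Fin R) (Fin R) ℂ := diagonal fun n => (x n : ℂ)
  set c' : Fin R → ℂ := fun n => (c n : ℂ)
  have hdisp : X * A - A * X = vecMulVec c' c' - diagonal (c' ^ 2) := by
    ext m n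
    have := congrFun₂ (diagonal_mul_Bmat_sub_Bmat_mul_diagonal x c hx) m n
    simp only [Matrix.sub_apply, diagonal_mul, mul_diagonal, vecMulVec_apply, diagonal_apply,
      Matrix.map_apply, Pi.pow_apply, X, A, c'] at this ⊢
    split_ifs at this ⊢ <;> exact_mod_cast this
  have hcomm := (isHermitian_I_smul_Bmat x c).star_dotProduct_commutator_mulVec_eq_zero X hv
  rw [mul_smul_comm, smul_mul_assoc, ← smul_sub, hdisp, smul_mulVec, dotProduct_smul,
    sub_mulVec, vecMulVec_mulVec, hcv, dotProduct_sub] at hcomm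
  by_contra hv0
  have hpos : (diagonal (c' ^ 2)).PosDef :=
    PosDef.diagonal fun n => by
      simpa [c'] using Complex.zero_lt_real.2 (sq_pos_of_ne_zero (hc n))
  have := hpos.dotProduct_mulVec_pos hv0
  simp only [MulOpposite.op_zero, zero_smul, dotProduct_zero, zero_sub, smul_neg, neg_eq_zero,
    smul_eq_zero, Complex.I_ne_zero, false_or] at hcomm
  exact this.ne' hcomm

/-- If all the `c_n` are nonzero, then the complex eigenvalues of `B(x,c)`
(the roots of its characteristic polynomial over `ℂ`) are pairwise distinct:
there are `R` distinct eigenvalues. -/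
theorem eigenvalues_distinct {R : ℕ} (x c : Fin R → ℝ)
    (hx : Function.Injective x) (hc : ∀ n, c n ≠ 0) :
    (((Bmat x c).map (fun r => (r : ℂ))).charpoly.roots).Nodup ∧
    (((Bmat x c).map (fun r => (r : ℂ))).charpoly.roots).toFinset.card = R := by
  set A := (Bmat x c).map (fun r => (r : ℂ))
  have hH : (Complex.I • A).IsHermitian := isHermitian_I_smul_Bmat x c
  have hinj : Function.Injective hH.eigenvalues :=
    hH.eigenvalues_injective_of_eigenvector_dotProduct_eq_zero (fun n => (c n : ℂ))
      fun _ _ hv hcv => Bmat_eigenvector_eq_zero_of_dotProduct_eq_zero hx hc hv hcv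
  have hroots : A.charpoly.roots = Finset.univ.val.map fun i => -Complex.I * hH.eigenvalues i := by
    have h := hH.roots_charpoly_smul (-Complex.I)
    rwa [smul_smul, neg_mul, Complex.I_mul_I, neg_neg, one_smul] at h
  have hnodup : (Finset.univ.val.map fun i => -Complex.I * hH.eigenvalues i).Nodup :=
    Finset.univ.nodup.map fun i j hij => hinj (by simpa using hij)
  rw [hroots, Multiset.toFinset_card_of_nodup hnodup]
  exact ⟨hnodup, by simp⟩
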